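/- Let A be a finite alphabet with at least two letters, u ∈ A*, π a permutation of A (viewed as an automorphism of A*), and σ = ψ_u ∘ π. Then: (i) for every prefix w of Pal(u) there exists an endomorphism ρ of A* such that σ(a)·w = w·ρ(a) for all a ∈ A; and (ii) conversely, if a word w ∈ A* and an endomorphism ρ of A* satisfy σ(a)·w = w·ρ(a) for all a ∈ A, then w is a prefix of Pal(u). -/

import Mathlib

open List

section EpiDefs

variable {A : Type*}

/-- The episturmian generator ψ_a : a ↦ a, b ↦ ab for b ≠ a, as a map on words. -/
def psiL [DecidableEq A] (a : A) : List A → List A :=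
  fun u => (u.map (fun b => if b = a then [a] else [a, b])).flatten

/-- The episturmian generator ψ̄_a : a ↦ a, b ↦ ba for b ≠ a, as a map on words. -/
def psibarL [DecidableEq A] (a : A) : List A → List A :=
  fun u => (u.map (fun b => if b = a then [a] else [b, a])).flatten

/-- ψ_{u₁⋯uₙ} = ψ_{u₁} ∘ ⋯ ∘ ψ_{uₙ}. -/
def psiW [DecidableEq A] (u : List A) : List A → List A :=
  u.foldr (fun a f => psiL a ∘ f) id

/-- ψ̄_{u₁⋯uₙ} = ψ̄_{u₁} ∘ ⋯ ∘ ψ̄_{uₙ}. -/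
def psibarW [DecidableEq A] (u : List A) : List A → List A :=
  u.foldr (fun a f => psibarL a ∘ f) id

/-- There is a shortest palindrome having `x` as a prefix. -/
theorem exists_isPalClosure (x : List A) :
    ∃ p : List A, (p.reverse = p ∧ x <+: p) ∧
      ∀ q : List A, q.reverse = q → x <+: q → p.length ≤ q.length := by
  classical
  have hex : ∃ n : ℕ, ∃ p : List A, (p.reverse = p ∧ x <+: p) ∧ p.length = n :=
    ⟨(x ++ x.reverse).length, x ++ x.reverse, ⟨by simp, ⟨x.reverse, rfl⟩⟩, rfl⟩
  obtain ⟨p, hp, hlen⟩ := Nat.find_spec hex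
  refine ⟨p, hp, fun q h1 h2 => ?_⟩
  rw [hlen]
  exact Nat.find_le ⟨q, ⟨h1, h2⟩, rfl⟩

/-- `palPlus x = x⁽⁺⁾` is the shortest palindrome having `x` as a prefix. -/
noncomputable def palPlus (x : List A) : List A :=
  Classical.choose (exists_isPalClosure x)

/-- Iterated palindromic closure: Pal(ε) = ε, Pal(ua) = (Pal(u)a)⁽⁺⁾. -/
noncomputable def pal (u : List A) : List A :=
  u.foldl (fun p a => palPlus (p ++ [a])) []

/-- Longest common prefix. -/
def gcp [DecidableEq A] : List A → List A → List A
  | a :: x, b :: y => if a = b then a :: gcp x y else []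
  | _, _ => []

/-- Longest common suffix. -/
def gcs [DecidableEq A] (x y : List A) : List A :=
  (gcp x.reverse y.reverse).reverse

/-- The language of a (primitive) substitution: factors of σⁿ(a). -/
def LangS (σ : List A → List A) : Set (List A) :=
  {x | ∃ (n : ℕ) (a : A), x <:+: σ^[n] [a]}

/-- The language of the episturmian shift directed by `d`. -/
def LangD (d : ℕ → A) : Set (List A) :=
  {x | ∃ n : ℕ, x <:+: pal ((List.range n).map d)}

def LeftSpecial (L : Set (List A)) (v : List A) : Prop :=
  ∃ a b : A, a ≠ b ∧ a :: v ∈ L ∧ b :: v ∈ L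

def RightSpecial (L : Set (List A)) (v : List A) : Prop :=
  ∃ a b : A, a ≠ b ∧ v ++ [a] ∈ L ∧ v ++ [b] ∈ L

/-- The left return set of `u` in the language `L`. -/
def leftReturn (L : Set (List A)) (u : List A) : Set (List A) :=
  {r | r ++ u ∈ L ∧ (∃ s : List A, s ≠ [] ∧ r ++ u = u ++ s) ∧
    ¬∃ p q : List A, p ≠ [] ∧ q ≠ [] ∧ r ++ u = p ++ u ++ q}

/-- The right return set of `u` in the language `L`. -/
def rightReturn (L : Set (List A)) (u : List A) : Set (List A) :=
  {r | u ++ r ∈ L ∧ (∃ p : List A, p ≠ [] ∧ u ++ r = p ++ u) ∧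
    ¬∃ p q : List A, p ≠ [] ∧ q ≠ [] ∧ u ++ r = p ++ u ++ q}

/-- `σ` is an endomorphism of the free monoid A*. -/
def IsListHom (σ : List A → List A) : Prop :=
  ∀ x y : List A, σ (x ++ y) = σ x ++ σ y

/-- Primitivity of a substitution. -/
def IsPrimitiveSubst (σ : List A → List A) : Prop :=
  ∃ k : ℕ, 1 ≤ k ∧ ∀ a b : A, b ∈ σ^[k] [a]

/-- At least two distinct letters occur infinitely often in `d`. -/
def NonDegenerate (d : ℕ → A) : Prop :=
  ∃ a b : A, a ≠ b ∧ (∀ N : ℕ, ∃ n : ℕ, N ≤ n ∧ d n = a) ∧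
    (∀ N : ℕ, ∃ n : ℕ, N ≤ n ∧ d n = b)

end EpiDefs

section Proof
variable {A : Type*} [DecidableEq A]

theorem psiL_nil (a : A) : psiL a [] = [] := rfl
theorem psibarL_nil (a : A) : psibarL a [] = [] := rfl

theorem psiL_cons (a c : A) (m : List A) :
    psiL a (c :: m) = (if c = a then [a] else [a, c]) ++ psiL a m := by
  by_cases h : c = a <;> simp [psiL, h]

theorem psibarL_cons (a c : A) (m : List A) :
    psibarL a (c :: m) = (if c = a then [a] else [c, a]) ++ psibarL a m := by
  by_cases h : c = a <;> simp [psibarL, h]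

theorem psiL_append (a : A) (x y : List A) :
    psiL a (x ++ y) = psiL a x ++ psiL a y := by simp [psiL]

theorem psibarL_append (a : A) (x y : List A) :
    psibarL a (x ++ y) = psibarL a x ++ psibarL a y := by simp [psibarL]

theorem psiL_singleton (a c : A) : psiL a [c] = if c = a then [a] else [a, c] := by
  by_cases h : c = a <;> simp [psiL, h]

theorem psibarL_singleton (a c : A) : psibarL a [c] = if c = a then [a] else [c, a] := by
  by_cases h : c = a <;> simp [psibarL, h]

theorem psibarL_length (a : A) (m : List A) :
    (psibarL a m).length = (psiL a m).length := by
  induction m with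
  | nil => rfl
  | cons c m ih => by_cases h : c = a <;> simp [psiL_cons, psibarL_cons, h, ih]

theorem length_le_psiL (a : A) (m : List A) : m.length ≤ (psiL a m).length := by
  induction m with
  | nil => simp [psiL]
  | cons c m ih => by_cases h : c = a <;> simp [psiL_cons, h] <;> omega

theorem psiL_conj (a : A) (m : List A) : psiL a m ++ [a] = a :: psibarL a m := by
  induction m with
  | nil => rfl
  | cons c m ih =>
    rw [psiL_cons, psibarL_cons, append_assoc, ih]
    by_cases h : c = a <;> simp [h]

theorem reverse_psiL (a : A) (m : List A) :
    (psiL a m).reverse = psibarL a m.reverse := by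
  induction m with
  | nil => rfl
  | cons c m ih =>
    rw [psiL_cons, reverse_append, ih, reverse_cons, psibarL_append, psibarL_singleton]
    by_cases h : c = a <;> simp [h]

theorem psiL_reverse_eq (a : A) (m : List A) :
    psiL a m.reverse = (psibarL a m).reverse := by
  have := reverse_psiL a m.reverse
  rw [reverse_reverse] at this
  rw [← this, reverse_reverse]

theorem psiL_head (a : A) (m : List A) : psiL a m = [] ∨ ∃ t, psiL a m = a :: t := by
  cases m with
  | nil => exact Or.inl rfl
  | cons c m =>
    right
    by_cases h : c = a <;> simp [psiL_cons, h]

theorem psiL_concat_head (a : A) (m : List A) : ∃ t, psiL a m ++ [a] = a :: t := by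
  rcases psiL_head a m with h | ⟨t, h⟩
  · exact ⟨[], by simp [h]⟩
  · exact ⟨t ++ [a], by simp [h]⟩

theorem psiL_length_pos (a : A) {m : List A} (h : m ≠ []) : 0 < (psiL a m).length := by
  have := length_le_psiL a m
  have : 0 < m.length := length_pos_iff.mpr h
  omega

theorem psiL_inj (a : A) : ∀ x y : List A, psiL a x = psiL a y → x = y := by
  intro x
  induction x with
  | nil =>
    intro y h
    cases y with
    | nil => rfl
    | cons d y' =>
      exfalso
      apply_fun List.length at h
      rw [psiL_nil, psiL_cons] at h
      by_cases hd : d = a <;> simp [hd] at h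
  | cons c x' ih =>
    intro y h
    cases y with
    | nil =>
      exfalso
      apply_fun List.length at h
      rw [psiL_nil, psiL_cons] at h
      by_cases hc : c = a <;> simp [hc] at h
    | cons d y' =>
      rw [psiL_cons, psiL_cons] at h
      by_cases hc : c = a <;> by_cases hd : d = a
      · rw [if_pos hc, if_pos hd] at h
        simp only [cons_append, nil_append, cons.injEq, true_and] at h
        rw [hc, hd, ih _ h]
      · rw [if_pos hc, if_neg hd] at h
        simp only [cons_append, nil_append, cons.injEq, true_and] at h
        exfalso
        rcases psiL_head a x' with h0 | ⟨t, h0⟩ <;> rw [h0] at h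
        · exact (List.cons_ne_nil _ _) h.symm
        · exact hd ((cons.injEq _ _ _ _).mp h).1.symm
      · rw [if_neg hc, if_pos hd] at h
        simp only [cons_append, nil_append, cons.injEq, true_and] at h
        exfalso
        rcases psiL_head a y' with h0 | ⟨t, h0⟩ <;> rw [h0] at h
        · exact (List.cons_ne_nil _ _) h
        · exact hc ((cons.injEq _ _ _ _).mp h.symm).1.symm
      · rw [if_neg hc, if_neg hd] at h
        simp only [cons_append, nil_append, cons.injEq, true_and] at h
        obtain ⟨rfl, h2⟩ := h
        rw [ih _ h2]

theorem psibarL_inj (a : A) : ∀ x y : List A, psibarL a x = psibarL a y → x = y := by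
  intro x y h
  have h2 : psiL a x.reverse = psiL a y.reverse := by
    rw [psiL_reverse_eq, psiL_reverse_eq, h]
  have := psiL_inj a _ _ h2
  exact reverse_injective this

theorem psiL_prefix_mono (a : A) {x y : List A} (h : x <+: y) :
    psiL a x <+: psiL a y := by
  obtain ⟨t, rfl⟩ := h
  rw [psiL_append]; exact prefix_append _ _

theorem psiL_prefix_mono_concat (a : A) {x y : List A} (h : x <+: y) :
    psiL a x ++ [a] <+: psiL a y ++ [a] := by
  obtain ⟨t, rfl⟩ := h
  rw [psiL_append, append_assoc]
  apply (prefix_append_right_inj _).mpr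
  obtain ⟨t', ht'⟩ := psiL_concat_head a t
  rw [ht']
  exact ⟨t', rfl⟩

theorem psiL_prefix_reflect_concat (a : A) : ∀ x y : List A,
    psiL a x ++ [a] <+: psiL a y ++ [a] → x <+: y := by
  intro x
  induction x with
  | nil => intro y _; exact nil_prefix
  | cons c x' ih =>
    intro y h
    cases y with
    | nil =>
      exfalso
      have := h.length_le
      rw [psiL_cons, psiL_nil] at this
      by_cases hc : c = a <;> simp [hc] at this
    | cons d y' =>
      rw [psiL_cons, psiL_cons] at h
      by_cases hc : c = a <;> by_cases hd : d = a
      · rw [if_pos hc, if_pos hd] at h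
        simp only [cons_append, nil_append, cons_prefix_cons, true_and] at h
        exact (cons_prefix_cons).mpr ⟨hc.trans hd.symm, ih _ h⟩
      · rw [if_pos hc, if_neg hd] at h
        exfalso
        simp only [cons_append, nil_append, cons_prefix_cons, true_and] at h
        obtain ⟨t', ht'⟩ := psiL_concat_head a x'
        rw [ht'] at h
        exact hd ((cons_prefix_cons).mp h).1.symm
      · rw [if_neg hc, if_pos hd] at h
        exfalso
        simp only [cons_append, nil_append, cons_prefix_cons, true_and] at h
        obtain ⟨t', ht'⟩ := psiL_concat_head a y'
        rw [ht'] at h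
        exact hc ((cons_prefix_cons).mp h).1
      · rw [if_neg hc, if_neg hd] at h
        simp only [cons_append, nil_append, cons_prefix_cons, true_and] at h
        obtain ⟨hcd, h⟩ := h
        exact (cons_prefix_cons).mpr ⟨hcd, ih _ h⟩

theorem psiL_parse (a : A) : ∀ m w : List A, w <+: psiL a m →
    (∃ Y, Y <+: m ∧ w = psiL a Y) ∨ (∃ Y, Y <+: m ∧ w = psiL a Y ++ [a]) := by
  intro m
  induction m with
  | nil =>
    intro w h
    rw [psiL_nil] at h
    left
    exact ⟨[], nil_prefix, by simpa [psiL_nil] using prefix_nil.mp h⟩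
  | cons d m' ih =>
    intro w h
    rw [psiL_cons] at h
    cases w with
    | nil => exact Or.inl ⟨[], nil_prefix, rfl⟩
    | cons e w₁ =>
      by_cases hd : d = a
      · rw [if_pos hd] at h
        simp only [cons_append, nil_append, cons_prefix_cons] at h
        obtain ⟨he, h1⟩ := h
        subst he
        rcases ih w₁ h1 with ⟨Y', hY', rfl⟩ | ⟨Y', hY', rfl⟩
        · left
          refine ⟨e :: Y', ?_, ?_⟩
          · exact cons_prefix_cons.mpr ⟨hd.symm, hY'⟩
          · rw [psiL_cons, if_pos rfl]; rfl
        · right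
          refine ⟨e :: Y', ?_, ?_⟩
          · exact cons_prefix_cons.mpr ⟨hd.symm, hY'⟩
          · rw [psiL_cons, if_pos rfl]; rfl
      · rw [if_neg hd] at h
        simp only [cons_append, nil_append, cons_prefix_cons] at h
        obtain ⟨he, h1⟩ := h
        subst he
        cases w₁ with
        | nil => right; exact ⟨[], nil_prefix, by simp [psiL_nil]⟩
        | cons f w₂ =>
          simp only [cons_prefix_cons] at h1
          obtain ⟨hf, h2⟩ := h1
          subst hf
          rcases ih w₂ h2 with ⟨Y', hY', rfl⟩ | ⟨Y', hY', rfl⟩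
          · left
            refine ⟨f :: Y', cons_prefix_cons.mpr ⟨rfl, hY'⟩, ?_⟩
            rw [psiL_cons, if_neg hd]; rfl
          · right
            refine ⟨f :: Y', cons_prefix_cons.mpr ⟨rfl, hY'⟩, ?_⟩
            rw [psiL_cons, if_neg hd]; rfl

theorem suffix_split {x y t : List A} (h : t <:+ x ++ y) (hl : y.length ≤ t.length) :
    ∃ s', s' <:+ x ∧ t = s' ++ y := by
  have hrt : t.reverse <+: y.reverse ++ x.reverse := by
    rw [← reverse_append]; exact reverse_prefix.mpr h
  have hy : y.reverse <+: t.reverse :=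
    prefix_of_prefix_length_le (prefix_append _ _)
      (hrt.trans (prefix_refl _)) (by simpa using hl)
  obtain ⟨p, hp⟩ := hy
  refine ⟨p.reverse, ?_, ?_⟩
  · have hpx : p <+: x.reverse := by
      have : y.reverse ++ p <+: y.reverse ++ x.reverse := by rw [hp]; exact hrt
      exact (prefix_append_right_inj _).mp this
    obtain ⟨k, hk⟩ := hpx
    refine ⟨k.reverse, ?_⟩
    have : x = (p ++ k).reverse := by rw [hk, reverse_reverse]
    rw [this, reverse_append]
  · have : t = (y.reverse ++ p).reverse := by rw [hp, reverse_reverse]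
    rw [this, reverse_append, reverse_reverse]

theorem psiL_suffix_parse (a : A) : ∀ m t : List A, t <:+ psiL a m →
    (∃ w', w' <:+ m ∧ t = psiL a w') ∨
    (∃ c w', c ≠ a ∧ (c :: w') <:+ m ∧ t = c :: psiL a w') := by
  intro m
  induction m with
  | nil =>
    intro t ht
    rw [psiL_nil] at ht
    left
    exact ⟨[], suffix_refl _, by simpa [psiL_nil] using suffix_nil.mp ht⟩
  | cons d m' ih =>
    intro t ht
    rw [psiL_cons] at ht
    by_cases hlen : t.length ≤ (psiL a m').length
    · have ht' : t <:+ psiL a m' :=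
        suffix_of_suffix_length_le ht (suffix_append _ _) hlen
      rcases ih t ht' with ⟨w', hw', rfl⟩ | ⟨c, w', hc, hw', rfl⟩
      · exact Or.inl ⟨w', hw'.trans (suffix_cons d m'), rfl⟩
      · exact Or.inr ⟨c, w', hc, hw'.trans (suffix_cons d m'), rfl⟩
    · obtain ⟨s', hs', rfl⟩ := suffix_split ht (by omega)
      by_cases hd : d = a
      · rw [if_pos hd] at hs'
        obtain ⟨pre, hpre⟩ := hs'
        cases pre with
        | nil =>
          simp only [nil_append] at hpre
          left
          refine ⟨d :: m', suffix_refl _, ?_⟩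
          rw [psiL_cons, if_pos hd, hpre]
        | cons x pre' =>
          rw [cons_append] at hpre
          injection hpre with h1 h2
          have hs0 : s' = [] := (append_eq_nil_iff.mp h2).2
          left
          exact ⟨m', suffix_cons d m', by rw [hs0, nil_append]⟩
      · rw [if_neg hd] at hs'
        obtain ⟨pre, hpre⟩ := hs'
        cases pre with
        | nil =>
          simp only [nil_append] at hpre
          left
          refine ⟨d :: m', suffix_refl _, ?_⟩
          rw [psiL_cons, if_neg hd, hpre]
        | cons x pre' =>
          cases pre' with
          | nil =>
            simp only [cons_append, nil_append, cons.injEq] at hpre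
            obtain ⟨rfl, hpre2⟩ := hpre
            right
            refine ⟨d, m', hd, suffix_refl _, by rw [hpre2]; rfl⟩
          | cons x' pre'' =>
            rw [cons_append, cons_append] at hpre
            injection hpre with h1 h2
            injection h2 with h3 h4
            have hs0 : s' = [] := (append_eq_nil_iff.mp h4).2
            left
            exact ⟨m', suffix_cons d m', by rw [hs0, nil_append]⟩

set_option linter.unusedSectionVars false

theorem palPlus_pal (x : List A) : (palPlus x).reverse = palPlus x :=
  (Classical.choose_spec (exists_isPalClosure x)).1.1

theorem prefix_palPlus (x : List A) : x <+: palPlus x :=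
  (Classical.choose_spec (exists_isPalClosure x)).1.2

theorem palPlus_min (x : List A) :
    ∀ q : List A, q.reverse = q → x <+: q → (palPlus x).length ≤ q.length :=
  (Classical.choose_spec (exists_isPalClosure x)).2

theorem pal_unique {x p q : List A} (hp : p.reverse = p) (hq : q.reverse = q)
    (hxp : x <+: p) (hxq : x <+: q) (hl : p.length = q.length)
    (h2 : p.length ≤ 2 * x.length) : p = q := by
  have hxl : x.length ≤ p.length := hxp.length_le
  apply List.ext_getElem hl
  intro i h1 h2'
  by_cases hi : i < x.length
  · rw [← hxp.getElem hi, ← hxq.getElem hi]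
  · have hj : p.length - 1 - i < x.length := by omega
    have hip : p[i] = p[p.length - 1 - i]'(by omega) := by
      calc p[i] = p.reverse[i]'(by simpa using h1) := List.getElem_of_eq hp.symm h1
      _ = p[p.length - 1 - i]'(by omega) := List.getElem_reverse _
    have hiq : q[i] = q[p.length - 1 - i]'(by omega) := by
      calc q[i] = q.reverse[i]'(by simpa using h2') := List.getElem_of_eq hq.symm h2'
      _ = q[q.length - 1 - i]'(by omega) := List.getElem_reverse _
      _ = q[p.length - 1 - i]'(by omega) := by
          simp only [show q.length - 1 - i = p.length - 1 - i from by omega]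
    rw [hip, hiq, ← hxp.getElem hj, ← hxq.getElem hj]

theorem palPlus_eq {x p : List A} (hp : p.reverse = p) (hxp : x <+: p)
    (hmin : ∀ q : List A, q.reverse = q → x <+: q → p.length ≤ q.length) :
    palPlus x = p := by
  have h1 : (palPlus x).length ≤ p.length := palPlus_min x p hp hxp
  have h2 : p.length ≤ (palPlus x).length :=
    hmin _ (palPlus_pal x) (prefix_palPlus x)
  have h3 : p.length ≤ 2 * x.length := by
    have := hmin (x ++ x.reverse) (by simp) (prefix_append _ _)
    simpa [two_mul] using this
  exact pal_unique (palPlus_pal x) hp (prefix_palPlus x) hxp (le_antisymm h1 h2)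
    (by omega)

theorem overlap_lemma {x q : List A} (hq : q.reverse = q) (hx : x <+: q)
    (hlen : q.length < 2 * x.length) :
    (x.drop (q.length - x.length)).reverse = x.drop (q.length - x.length) := by
  have hxq : x.length ≤ q.length := hx.length_le
  obtain ⟨r, rfl⟩ := hx
  have hm : (x ++ r).length - x.length = r.length := by simp
  rw [hm]
  have heq : x ++ r = r.reverse ++ x.reverse := by
    conv_lhs => rw [← hq]
    rw [reverse_append]
  have hrx : r.length ≤ x.length := by simp at hlen; omega
  set t := x.drop r.length with htdef
  have h1 : x.reverse = t ++ r := by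
    have hdd := congrArg (List.drop r.length) heq
    rw [List.drop_append_of_le_length hrx,
      List.drop_left' (by simp : (r.reverse).length = r.length)] at hdd
    exact hdd.symm
  have h2 : x = r.reverse ++ t.reverse := by
    have := congrArg List.reverse h1
    rw [reverse_reverse, reverse_append] at this
    exact this
  have hlen2 : (r.reverse).length = (x.take r.length).length := by
    simp; omega
  have h5 := h2.symm.trans ((List.take_append_drop r.length x).symm)
  exact (List.append_inj h5 hlen2).2

theorem exists_lps (x : List A) (hx : x ≠ []) :
    ∃ z s : List A, x = z ++ s ∧ s.reverse = s ∧ s ≠ [] ∧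
      ∀ t, t <:+ x → t.reverse = t → t.length ≤ s.length := by
  classical
  obtain ⟨y, b0, rfl⟩ : ∃ y b0, x = y ++ [b0] := by
    rcases List.eq_nil_or_concat x with h | ⟨L, b, h⟩
    · exact absurd h hx
    · exact ⟨L, b, by rw [h, concat_eq_append]⟩
  set x := y ++ [b0] with hxdef
  have hex : ∃ n, n < x.length ∧ (x.drop n).reverse = x.drop n := by
    refine ⟨y.length, by rw [hxdef]; simp, ?_⟩
    rw [hxdef, List.drop_left]
    rfl
  let k := Nat.find hex
  obtain ⟨hk1, hk2⟩ : k < x.length ∧ (x.drop k).reverse = x.drop k := Nat.find_spec hex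
  refine ⟨x.take k, x.drop k, (List.take_append_drop _ _).symm, hk2, ?_, ?_⟩
  · intro h
    rw [List.drop_eq_nil_iff] at h
    omega
  · intro t ht hpal
    rcases eq_or_ne t [] with rfl | htne
    · simp only [length_nil]; exact Nat.zero_le _
    · have htx : t.length ≤ x.length := ht.length_le
      have htpos : 0 < t.length := length_pos_iff.mpr htne
      obtain ⟨pre, hpre⟩ := ht
      have hdrop : x.drop (x.length - t.length) = t := by
        have hl : pre.length = x.length - t.length := by
          have := congrArg List.length hpre
          simp at this; omega
        rw [← hl, ← hpre, List.drop_left]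
      have hfind : k ≤ x.length - t.length :=
        Nat.find_le ⟨by omega, by rw [hdrop]; exact hpal⟩
      have : (x.drop k).length = x.length - k := by simp
      omega

theorem suffix_concat {w y : List A} (b : A) (h : w <:+ y ++ [b]) (hne : w ≠ []) :
    ∃ w₂, w = w₂ ++ [b] ∧ w₂ <:+ y := by
  have hr : w.reverse <+: b :: y.reverse := by
    have := reverse_prefix.mpr h
    rwa [reverse_append] at this
  cases hw : w.reverse with
  | nil => exact absurd (by simpa using congrArg List.reverse hw) hne
  | cons e t =>
    rw [hw] at hr
    obtain ⟨he, ht⟩ := cons_prefix_cons.mp hr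
    refine ⟨t.reverse, ?_, ?_⟩
    · have := congrArg List.reverse hw
      rw [reverse_reverse] at this
      rw [this, reverse_cons, he]
    · obtain ⟨k, hk⟩ := ht
      refine ⟨k.reverse, ?_⟩
      have := congrArg List.reverse hk
      rwa [reverse_append, reverse_reverse] at this

theorem psiL_suffix_le (a : A) {v s : List A} (h : v <:+ s) :
    (psiL a v).length ≤ (psiL a s).length := by
  obtain ⟨pre, rfl⟩ := h
  rw [psiL_append]
  simp

theorem palsuf_bound_ne (a b : A) (hab : b ≠ a) (p s : List A)
    (hs : s <:+ p ++ [b]) (hsne : s ≠ [])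
    (hmax : ∀ v, v <:+ p ++ [b] → v.reverse = v → v.length ≤ s.length)
    (t : List A) (ht : t <:+ psiL a (p ++ [b])) (hpal : t.reverse = t) :
    t.length + 1 ≤ (psiL a s).length := by
  have hs2 : 2 ≤ (psiL a s).length := by
    obtain ⟨s₂, rfl, -⟩ := suffix_concat b hs hsne
    rw [psiL_append, psiL_singleton, if_neg hab]
    simp
  rcases psiL_suffix_parse a _ t ht with ⟨w', hw', rfl⟩ | ⟨c, w', hc, hw', rfl⟩
  · rcases eq_or_ne w' [] with rfl | hne
    · simp only [psiL_nil, length_nil]; omega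
    · exfalso
      obtain ⟨w₂, rfl, -⟩ := suffix_concat b hw' hne
      obtain ⟨t', ht'⟩ := psiL_concat_head a w₂
      have hfull : psiL a (w₂ ++ [b]) = (a :: t') ++ [b] := by
        rw [psiL_append, psiL_singleton, if_neg hab]
        rw [show [a,b] = [a] ++ [b] from rfl, ← append_assoc, ht']
      rw [hfull, reverse_append] at hpal
      rw [show (a :: t') ++ [b] = a :: (t' ++ [b]) from by simp] at hpal
      have : b = a := by
        have := congrArg (fun l => l.head?) hpal
        simpa using this
      exact hab this
  · rcases eq_or_ne w' [] with rfl | hne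
    · simp only [psiL_nil, length_nil, length_cons]; omega
    · have hw'' : w' <:+ p ++ [b] := (suffix_cons c w').trans hw'
      obtain ⟨w₂, rfl, -⟩ := suffix_concat b hw'' hne
      obtain ⟨t', ht'⟩ := psiL_concat_head a w₂
      have hfull : c :: psiL a (w₂ ++ [b]) = (c :: a :: t') ++ [b] := by
        rw [psiL_append, psiL_singleton, if_neg hab]
        rw [show [a,b] = [a] ++ [b] from rfl, ← append_assoc, ht']
        rfl
      have hcb : c = b := by
        have hh := hpal
        rw [hfull, reverse_append] at hh
        have := congrArg (fun l => l.head?) hh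
        simpa using this.symm
      subst hcb
      have hv1 : psiL a (c :: (w₂ ++ [c])) = a :: (c :: psiL a (w₂ ++ [c])) := by
        rw [psiL_cons, if_neg hc]
        rfl
      have hv2 : psibarL a (c :: (w₂ ++ [c])) = (c :: psiL a (w₂ ++ [c])) ++ [a] := by
        have h0 := psiL_conj a (c :: (w₂ ++ [c]))
        rw [hv1, cons_append] at h0
        injection h0 with h1 h2
        exact h2.symm
      have hv3 : psibarL a ((c :: (w₂ ++ [c])).reverse)
          = (c :: psiL a (w₂ ++ [c])) ++ [a] := by
        rw [← reverse_psiL, hv1, reverse_cons, hpal]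
      have hvpal : (c :: (w₂ ++ [c])).reverse = c :: (w₂ ++ [c]) :=
        psibarL_inj a _ _ (hv3.trans hv2.symm)
      have hle : (c :: (w₂ ++ [c])).length ≤ s.length := hmax _ hw' hvpal
      have hsuf : (c :: (w₂ ++ [c])) <:+ s := suffix_of_suffix_length_le hw' hs hle
      have hfin := psiL_suffix_le a hsuf
      rw [hv1] at hfin
      simp only [length_cons] at hfin ⊢
      omega

theorem palsuf_bound_eq (a : A) (p s : List A)
    (hs : s <:+ p ++ [a])
    (hmax : ∀ v, v <:+ p ++ [a] → v.reverse = v → v.length ≤ s.length)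
    (t : List A) (ht : t <:+ psiL a (p ++ [a]) ++ [a]) (hpal : t.reverse = t) :
    t.length ≤ (psiL a s).length + 1 := by
  rcases eq_or_ne t [] with rfl | htne
  · simp
  · obtain ⟨t'', rfl, ht''⟩ := suffix_concat a ht htne
    rcases psiL_suffix_parse a _ t'' ht'' with ⟨w', hw', rfl⟩ | ⟨c, w', hc, hw', rfl⟩
    · have h1 : psiL a w' ++ [a] = a :: psibarL a w' := psiL_conj a w'
      have h2 : (psiL a w' ++ [a]).reverse = a :: psibarL a (w'.reverse) := by
        rw [reverse_append, reverse_psiL]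
        rfl
      have h3 : psibarL a w'.reverse = psibarL a w' := by
        have h4 := h2.symm.trans (hpal.trans h1)
        injection h4
      have hw'pal : w'.reverse = w' := psibarL_inj a _ _ h3
      have hle : w'.length ≤ s.length := hmax _ hw' hw'pal
      have hsuf : w' <:+ s := suffix_of_suffix_length_le hw' hs hle
      have hfin := psiL_suffix_le a hsuf
      simp only [length_append, length_cons, length_nil]
      omega
    · exfalso
      have hh := hpal
      rw [reverse_append, cons_append] at hh
      have := congrArg (fun l => l.head?) hh
      simp at this
      exact hc this.symm

theorem Lstar (a b : A) (p : List A) (hp : p.reverse = p) :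
    palPlus (psiL a p ++ [a] ++ [b]) = psiL a (palPlus (p ++ [b])) ++ [a] := by
  obtain ⟨z, s, hzs, hspal, hsne, hmax⟩ := exists_lps (p ++ [b]) (by simp)
  have hssuf : s <:+ p ++ [b] := ⟨z, hzs.symm⟩
  have hQ : palPlus (p ++ [b]) = (p ++ [b]) ++ z.reverse := by
    apply palPlus_eq
    · rw [hzs, reverse_append, reverse_append, reverse_reverse, hspal, append_assoc]
    · exact prefix_append _ _
    · intro q hq hxq
      have hlq : (p ++ [b]).length ≤ q.length := hxq.length_le
      have hzl : z.length + s.length = (p ++ [b]).length := by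
        rw [hzs]; simp
      by_cases hql : q.length < 2 * (p ++ [b]).length
      · have hov := overlap_lemma hq hxq hql
        have hts : (p ++ [b]).drop (q.length - (p ++ [b]).length) <:+ (p ++ [b]) :=
          drop_suffix _ _
        have hb := hmax _ hts hov
        have hdl : ((p ++ [b]).drop (q.length - (p ++ [b]).length)).length
            = (p ++ [b]).length - (q.length - (p ++ [b]).length) := by simp
        simp only [length_append, length_reverse] at *
        omega
      · have hsl : 1 ≤ s.length := length_pos_iff.mpr hsne
        simp only [length_append, length_reverse] at *
        omega
  have hrev : (psiL a z.reverse).length = (psiL a z).length := by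
    rw [psiL_reverse_eq, length_reverse, psibarL_length]
  by_cases hba : b = a
  · subst hba
    have hX : psiL b p ++ [b] ++ [b] = psiL b (p ++ [b]) ++ [b] := by
      rw [psiL_append, psiL_singleton, if_pos rfl]
    rw [hX]
    have hQpal : (palPlus (p ++ [b])).reverse = palPlus (p ++ [b]) := palPlus_pal _
    apply palPlus_eq
    · rw [reverse_append, reverse_psiL, hQpal, psiL_conj]
      rfl
    · exact psiL_prefix_mono_concat b (prefix_palPlus _)
    · intro q hq hXq
      have hQlen : (psiL b (palPlus (p ++ [b]))).length
          = (psiL b z).length + (psiL b s).length + (psiL b z.reverse).length := by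
        rw [hQ, hzs]
        simp only [psiL_append, length_append]
      have hXlen : (psiL b (p ++ [b])).length = (psiL b z).length + (psiL b s).length := by
        rw [hzs, psiL_append]
        simp
      have hXq' := hXq.length_le
      by_cases hql : q.length < 2 * (psiL b (p ++ [b]) ++ [b]).length
      · have hov := overlap_lemma hq hXq hql
        have hts := drop_suffix (q.length - (psiL b (p ++ [b]) ++ [b]).length)
          (psiL b (p ++ [b]) ++ [b])
        have hbound := palsuf_bound_eq b p s hssuf hmax _ hts hov
        have hdl : ((psiL b (p ++ [b]) ++ [b]).drop
            (q.length - (psiL b (p ++ [b]) ++ [b]).length)).length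
            = (psiL b (p ++ [b]) ++ [b]).length
              - (q.length - (psiL b (p ++ [b]) ++ [b]).length) := by simp
        simp only [length_append, length_cons, length_nil] at *
        omega
      · have hsl := psiL_length_pos b hsne
        simp only [length_append, length_cons, length_nil] at *
        omega
  · have hX : psiL a p ++ [a] ++ [b] = psiL a (p ++ [b]) := by
      rw [psiL_append, psiL_singleton, if_neg hba]
      simp
    rw [hX]
    have hQpal : (palPlus (p ++ [b])).reverse = palPlus (p ++ [b]) := palPlus_pal _
    apply palPlus_eq
    · rw [reverse_append, reverse_psiL, hQpal, psiL_conj]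
      rfl
    · exact (psiL_prefix_mono a (prefix_palPlus _)).trans ⟨[a], rfl⟩
    · intro q hq hXq
      have hQlen : (psiL a (palPlus (p ++ [b]))).length
          = (psiL a z).length + (psiL a s).length + (psiL a z.reverse).length := by
        rw [hQ, hzs]
        simp only [psiL_append, length_append]
      have hXlen : (psiL a (p ++ [b])).length = (psiL a z).length + (psiL a s).length := by
        rw [hzs, psiL_append]
        simp
      have hXq' := hXq.length_le
      by_cases hql : q.length < 2 * (psiL a (p ++ [b])).length
      · have hov := overlap_lemma hq hXq hql
        have hts := drop_suffix (q.length - (psiL a (p ++ [b])).length) (psiL a (p ++ [b]))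
        have hbound := palsuf_bound_ne a b hba p s hssuf hsne hmax _ hts hov
        have hdl : ((psiL a (p ++ [b])).drop (q.length - (psiL a (p ++ [b])).length)).length
            = (psiL a (p ++ [b])).length - (q.length - (psiL a (p ++ [b])).length) := by simp
        simp only [length_append, length_cons, length_nil] at *
        omega
      · have hsl := psiL_length_pos a hsne
        simp only [length_append, length_cons, length_nil] at *
        omega

def palA : List A → List A
  | [] => []
  | a :: v => psiL a (palA v) ++ [a]

theorem palA_pal (u : List A) : (palA u).reverse = palA u := by
  induction u with
  | nil => rfl
  | cons a v ih =>
    show (psiL a (palA v) ++ [a]).reverse = psiL a (palA v) ++ [a]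
    rw [reverse_append, reverse_psiL, ih, psiL_conj]
    rfl

theorem palA_step (u : List A) (b : A) :
    palPlus (palA u ++ [b]) = palA (u ++ [b]) := by
  induction u with
  | nil =>
    show palPlus ([] ++ [b]) = psiL b (palA []) ++ [b]
    rw [nil_append]
    show palPlus [b] = psiL b [] ++ [b]
    rw [psiL_nil, nil_append]
    apply palPlus_eq
    · rfl
    · exact prefix_refl _
    · intro q hq hxq
      exact hxq.length_le
  | cons a v ih =>
    show palPlus ((psiL a (palA v) ++ [a]) ++ [b]) = psiL a (palA (v ++ [b])) ++ [a]
    rw [Lstar a b (palA v) (palA_pal v), ih]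

theorem pal_eq_palA (u : List A) : pal u = palA u := by
  induction u using List.reverseRecOn with
  | nil => rfl
  | append_singleton u b ih =>
    show (u ++ [b]).foldl (fun p a => palPlus (p ++ [a])) [] = palA (u ++ [b])
    rw [List.foldl_append]
    show palPlus ((pal u) ++ [b]) = palA (u ++ [b])
    rw [ih, palA_step]

theorem psiW_nil (x : List A) : psiW [] x = x := rfl

theorem psiW_cons (a : A) (v x : List A) : psiW (a :: v) x = psiL a (psiW v x) := rfl

theorem psibarW_nil (x : List A) : psibarW [] x = x := rfl

theorem psibarW_cons (a : A) (v x : List A) :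
    psibarW (a :: v) x = psibarL a (psibarW v x) := rfl

theorem psiW_append_arg (u : List A) (x y : List A) :
    psiW u (x ++ y) = psiW u x ++ psiW u y := by
  induction u with
  | nil => rfl
  | cons a v ih => rw [psiW_cons, psiW_cons, psiW_cons, ih, psiL_append]

theorem reverse_psiW (u x : List A) :
    (psiW u x).reverse = psibarW u x.reverse := by
  induction u with
  | nil => rfl
  | cons a v ih => rw [psiW_cons, reverse_psiL, ih, psibarW_cons]

theorem psibarW_length_single (u : List A) (c : A) :
    (psibarW u [c]).length = (psiW u [c]).length := by
  have := congrArg List.length (reverse_psiW u [c])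
  simpa using this.symm

theorem length_le_psiW (u x : List A) : x.length ≤ (psiW u x).length := by
  induction u with
  | nil => exact le_refl _
  | cons a v ih => exact ih.trans (length_le_psiL a _)

theorem conjW (u x : List A) : psiW u x ++ palA u = palA u ++ psibarW u x := by
  induction u with
  | nil => simp [psiW_nil, psibarW_nil, palA]
  | cons a v ih =>
    show psiL a (psiW v x) ++ (psiL a (palA v) ++ [a])
        = (psiL a (palA v) ++ [a]) ++ psibarL a (psibarW v x)
    rw [← append_assoc, ← psiL_append, ih, psiL_append, append_assoc, append_assoc,
      psiL_conj]
    rfl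

theorem prefix_drop_eq {w y : List A} (h : w <+: y) : y = w ++ y.drop w.length := by
  obtain ⟨t, rfl⟩ := h
  rw [List.drop_left]

theorem pump (a : A) : ∀ n (w s₀ : List A), w.length ≤ n → psiL a s₀ ≠ [] →
    (∃ r, psiL a s₀ ++ w = w ++ r) → ∃ m, w <+: psiL a m := by
  intro n
  induction n with
  | zero =>
    intro w s₀ hw _ _
    have : w = [] := eq_nil_of_length_eq_zero (by omega)
    exact ⟨s₀, this ▸ nil_prefix⟩
  | succ n ih =>
    intro w s₀ hw hzne hr
    obtain ⟨r, hr⟩ := hr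
    by_cases hlen : w.length ≤ (psiL a s₀).length
    · have h1 : w <+: psiL a s₀ ++ w := by
        rw [hr]; exact prefix_append _ _
      exact ⟨s₀, prefix_of_prefix_length_le h1 (prefix_append _ _) hlen⟩
    · have h1 : w <+: psiL a s₀ ++ w := by
        rw [hr]; exact prefix_append _ _
      have hzw : psiL a s₀ <+: w :=
        prefix_of_prefix_length_le (prefix_append _ _) h1 (by omega)
      obtain ⟨w₂, rfl⟩ := hzw
      rw [append_assoc] at hr
      have hr2 : psiL a s₀ ++ w₂ = w₂ ++ r := by
        have := hr
        rwa [List.append_cancel_left_eq] at this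
      have hpos : 0 < (psiL a s₀).length := length_pos_iff.mpr hzne
      have hw2 : w₂.length ≤ n := by
        rw [length_append] at hw; omega
      obtain ⟨m, hm⟩ := ih w₂ s₀ hw2 hzne ⟨r, hr2⟩
      exact ⟨s₀ ++ m, by rw [psiL_append]; exact (prefix_append_right_inj _).mpr hm⟩

theorem descend_B (a : A) (w' : List A) (S : A → List A)
    (h : ∀ c : A, ∃ r, psiL a (S c) ++ (psiL a w' ++ [a]) = (psiL a w' ++ [a]) ++ r) :
    ∀ c : A, ∃ r, S c ++ w' = w' ++ r := by
  intro c
  obtain ⟨r, hr⟩ := h c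
  have hr2 : psiL a (S c ++ w') ++ [a] = (psiL a w' ++ [a]) ++ r := by
    rw [psiL_append, append_assoc]
    exact hr
  have hpre : psiL a w' ++ [a] <+: psiL a (S c ++ w') ++ [a] := by
    rcases eq_or_ne r [] with rfl | hrne
    · rw [append_nil] at hr2
      exact hr2.symm ▸ prefix_refl _
    · -- (psiL a w' ++ [a]) ++ r = psiL a (S c ++ w') ++ [a]
      exact ⟨r, hr2.symm⟩
  have hw' : w' <+: S c ++ w' := psiL_prefix_reflect_concat a _ _ hpre
  exact ⟨(S c ++ w').drop w'.length, prefix_drop_eq hw'⟩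

theorem descend_A (a : A) (w₂ : List A) (cl : A) (hcl : cl ≠ a) (S : A → List A)
    (h : ∀ c : A, ∃ r, psiL a (S c) ++ psiL a (w₂ ++ [cl]) = psiL a (w₂ ++ [cl]) ++ r) :
    ∀ c : A, ∃ r, S c ++ (w₂ ++ [cl]) = (w₂ ++ [cl]) ++ r := by
  intro c
  obtain ⟨r, hr⟩ := h c
  have hr2 : psiL a (S c ++ (w₂ ++ [cl])) = psiL a (w₂ ++ [cl]) ++ r := by
    rw [psiL_append]; exact hr
  have hpre : psiL a (w₂ ++ [cl]) <+: psiL a (S c ++ (w₂ ++ [cl])) := ⟨r, hr2.symm⟩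
  rcases psiL_parse a _ _ hpre with ⟨Y, hY, hform⟩ | ⟨Y, hY, hform⟩
  · have := psiL_inj a _ _ hform
    rw [← this] at hY
    exact ⟨_, prefix_drop_eq hY⟩
  · exfalso
    rw [psiL_append, psiL_singleton, if_neg hcl] at hform
    have hform2 : (psiL a w₂ ++ [a]) ++ [cl] = psiL a Y ++ [a] := by
      rw [append_assoc]; exact hform
    have := (List.append_inj' hform2 rfl).2
    injection this with h1
    exact hcl h1

theorem dir2 [Fintype A] (hA : 1 < Fintype.card A) (π : Equiv.Perm A) :
    ∀ u w : List A, (∀ c : A, ∃ r, psiW u [π c] ++ w = w ++ r) → w <+: pal u := by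
  intro u
  induction u with
  | nil =>
    intro w h
    cases w with
    | nil => exact nil_prefix
    | cons d w₂ =>
      exfalso
      obtain ⟨c₁, c₂, hne⟩ := Fintype.exists_pair_of_one_lt_card hA
      have key : ∀ c : A, π c = d := by
        intro c
        obtain ⟨r, hr⟩ := h c
        have := congrArg (fun l => l.head?) hr
        simpa [psiW_nil] using this
      exact hne (π.injective ((key c₁).trans (key c₂).symm))
  | cons a v ih =>
    intro w h
    rcases eq_or_ne w [] with rfl | hwne
    · exact nil_prefix
    obtain ⟨c₀, -, -⟩ := Fintype.exists_pair_of_one_lt_card hA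
    have hzne : psiL a (psiW v [π c₀]) ≠ [] := by
      have h1 : (1:ℕ) ≤ (psiW v [π c₀]).length := by
        simpa using length_le_psiW v [π c₀]
      have h2 := length_le_psiL a (psiW v [π c₀])
      exact List.length_pos_iff.mp (by omega)
    obtain ⟨m, hwm⟩ := pump a w.length w (psiW v [π c₀]) le_rfl hzne (h c₀)
    have hgoal : pal (a :: v) = psiL a (palA v) ++ [a] := by
      rw [pal_eq_palA]; rfl
    rcases psiL_parse a m w hwm with ⟨Y, hY, rfl⟩ | ⟨Y, hY, rfl⟩
    · rcases List.eq_nil_or_concat Y with rfl | ⟨Y₂, cl, rfl⟩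
      · exact absurd rfl hwne
      · rw [concat_eq_append] at *
        by_cases hcl : cl = a
        · subst cl
          have hwB : psiL a (Y₂ ++ [a]) = psiL a Y₂ ++ [a] := by
            rw [psiL_append, psiL_singleton, if_pos rfl]
          rw [hwB] at h ⊢
          have hdesc := descend_B a Y₂ (fun c => psiW v [π c]) h
          have hY₂ := ih Y₂ hdesc
          rw [pal_eq_palA] at hY₂
          rw [hgoal]
          exact psiL_prefix_mono_concat a hY₂
        · have hdesc := descend_A a Y₂ cl hcl (fun c => psiW v [π c]) h
          have hY' := ih (Y₂ ++ [cl]) hdesc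
          rw [pal_eq_palA] at hY'
          rw [hgoal]
          exact (psiL_prefix_mono a hY').trans ⟨[a], rfl⟩
    · have hdesc := descend_B a Y (fun c => psiW v [π c]) h
      have hY' := ih Y hdesc
      rw [pal_eq_palA] at hY'
      rw [hgoal]
      exact psiL_prefix_mono_concat a hY'

theorem dir1 (u : List A) (π : Equiv.Perm A) (w : List A) (hw : w <+: pal u) :
    ∃ ρ : List A → List A, IsListHom ρ ∧ ∀ c : A, psiW u [π c] ++ w = w ++ ρ [c] := by
  refine ⟨fun x => (x.map (fun c => (psiW u [π c] ++ w).drop w.length)).flatten, ?_, ?_⟩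
  · intro x y
    simp
  · intro c
    have hρ : (([c].map (fun c => (psiW u [π c] ++ w).drop w.length)).flatten)
        = (psiW u [π c] ++ w).drop w.length := by simp
    show psiW u [π c] ++ w
        = w ++ (([c].map (fun c => (psiW u [π c] ++ w).drop w.length)).flatten)
    rw [hρ]
    have h2 : psiW u [π c] ++ pal u = pal u ++ psibarW u [π c] := by
      rw [pal_eq_palA]
      exact conjW u [π c]
    have h1 : psiW u [π c] ++ w <+: pal u ++ psibarW u [π c] := by
      rw [← h2]
      exact (prefix_append_right_inj _).mpr hw
    have h3 : w <+: pal u ++ psibarW u [π c] := hw.trans (prefix_append _ _)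
    have hpw : w <+: psiW u [π c] ++ w :=
      prefix_of_prefix_length_le h3 h1 (by simp)
    exact prefix_drop_eq hpw

theorem right_conjugates_are_prefixes_of_pal' {A : Type*} [Fintype A] [DecidableEq A]
    (hA : 1 < Fintype.card A) (u : List A) (π : Equiv.Perm A) :
    (∀ w : List A, w <+: pal u →
      ∃ ρ : List A → List A, IsListHom ρ ∧
        ∀ a : A, psiW u [π a] ++ w = w ++ ρ [a]) ∧
    (∀ (w : List A) (ρ : List A → List A), IsListHom ρ →
      (∀ a : A, psiW u [π a] ++ w = w ++ ρ [a]) → w <+: pal u) := by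
  constructor
  · intro w hw
    exact dir1 u π w hw
  · intro w ρ _ hcomm
    exact dir2 hA π u w (fun c => ⟨ρ [c], hcomm c⟩)

end Proof

/-- for σ = ψ_u ∘ π, the words `w` such that there is an endomorphism
ρ with σ(a)·w = w·ρ(a) for all letters a are exactly the prefixes of Pal(u). -/
theorem right_conjugates_are_prefixes_of_pal {A : Type*} [Fintype A] [DecidableEq A]
    (hA : 1 < Fintype.card A) (u : List A) (π : Equiv.Perm A) :
    (∀ w : List A, w <+: pal u →
      ∃ ρ : List A → List A, IsListHom ρ ∧
        ∀ a : A, psiW u [π a] ++ w = w ++ ρ [a]) ∧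
    (∀ (w : List A) (ρ : List A → List A), IsListHom ρ →
      (∀ a : A, psiW u [π a] ++ w = w ++ ρ [a]) → w <+: pal u) := by
  exact right_conjugates_are_prefixes_of_pal' hA u π
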